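/- For the Kepler Hamiltonian H_K = (p_x²+p_y²)/2 − a/√(x²+y²), the one-form f dH_K + g N^T dH_K with f = 2x, g = −1, and N^T the transpose of the matrix N = [[2x, y, 0, 0],[y, 0, 0, 0],[0, p_y, 2x, y],[−p_y, 0, y, 0]] (acting on covectors in coordinates (x,y,p_x,p_y)), equals the exact differential of A = p_y(x p_y − y p_x) − a x/√(x²+y²). -/

import Mathlib

noncomputable section

open Real Set

/-- Partial derivative w.r.t. the 1st argument. -/
def pd1 (F : ℝ → ℝ → ℝ → ℝ → ℝ) (x y z w : ℝ) : ℝ := deriv (fun t => F t y z w) x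
/-- Partial derivative w.r.t. the 2nd argument. -/
def pd2 (F : ℝ → ℝ → ℝ → ℝ → ℝ) (x y z w : ℝ) : ℝ := deriv (fun t => F x t z w) y
/-- Partial derivative w.r.t. the 3rd argument. -/
def pd3 (F : ℝ → ℝ → ℝ → ℝ → ℝ) (x y z w : ℝ) : ℝ := deriv (fun t => F x y t w) z
/-- Partial derivative w.r.t. the 4th argument. -/
def pd4 (F : ℝ → ℝ → ℝ → ℝ → ℝ) (x y z w : ℝ) : ℝ := deriv (fun t => F x y z t) w

/-- Canonical Poisson bracket on ℝ⁴ with coordinates (q₁, q₂, p₁, p₂). -/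
def pb (F G : ℝ → ℝ → ℝ → ℝ → ℝ) (x y z w : ℝ) : ℝ :=
  pd1 F x y z w * pd3 G x y z w - pd3 F x y z w * pd1 G x y z w
  + pd2 F x y z w * pd4 G x y z w - pd4 F x y z w * pd2 G x y z w

/-- The planar Kepler Hamiltonian. -/
def HK (a : ℝ) : ℝ → ℝ → ℝ → ℝ → ℝ := fun x y px py =>
  (px ^ 2 + py ^ 2) / 2 - a / Real.sqrt (x ^ 2 + y ^ 2)

/-- The x-component of the Laplace–Runge–Lenz vector. -/
def LRL (a : ℝ) : ℝ → ℝ → ℝ → ℝ → ℝ := fun x y px py =>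
  py * (x * py - y * px) - a * x / Real.sqrt (x ^ 2 + y ^ 2)

/-- The parabolic Nijenhuis tensor for the Kepler model, in Cartesian coordinates. -/
def NparK (x y px py : ℝ) : Matrix (Fin 4) (Fin 4) ℝ :=
  !![2 * x, y, 0, 0;
     y, 0, 0, 0;
     0, py, 2 * x, y;
     -py, 0, y, 0]

/-- The differential (gradient covector) of a function of (x, y, pₓ, p_y). -/
def grad4 (F : ℝ → ℝ → ℝ → ℝ → ℝ) (x y px py : ℝ) : Fin 4 → ℝ :=
  ![pd1 F x y px py, pd2 F x y px py, pd3 F x y px py, pd4 F x y px py]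

lemma sqrt_hda (x c : ℝ) (h : 0 < x ^ 2 + c) :
    HasDerivAt (fun t : ℝ => Real.sqrt (t ^ 2 + c)) (x / Real.sqrt (x ^ 2 + c)) x := by
  have h1 : HasDerivAt (fun t : ℝ => t ^ 2 + c) (2 * x) x := by
    simpa using (hasDerivAt_pow 2 x).add_const c
  have h2 := (Real.hasDerivAt_sqrt (ne_of_gt h)).comp x h1
  refine h2.congr_deriv (Eq.symm ?_)
  have hs : Real.sqrt (x ^ 2 + c) ≠ 0 := by positivity
  field_simp

lemma sqrt_hda2 (y c : ℝ) (h : 0 < c + y ^ 2) :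
    HasDerivAt (fun t : ℝ => Real.sqrt (c + t ^ 2)) (y / Real.sqrt (c + y ^ 2)) y := by
  have h1 : HasDerivAt (fun t : ℝ => c + t ^ 2) (2 * y) y := by
    simpa using ((hasDerivAt_pow 2 y).const_add c)
  have h2 := (Real.hasDerivAt_sqrt (ne_of_gt h)).comp y h1
  refine h2.congr_deriv (Eq.symm ?_)
  have hs : Real.sqrt (c + y ^ 2) ≠ 0 := by positivity
  field_simp

lemma pd1_HK (a x y px py : ℝ) (h : 0 < x ^ 2 + y ^ 2) :
    pd1 (HK a) x y px py = a * x / Real.sqrt (x ^ 2 + y ^ 2) ^ 3 := by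
  have hr : (0:ℝ) < Real.sqrt (x ^ 2 + y ^ 2) := Real.sqrt_pos.mpr h
  have hr2 : Real.sqrt (x ^ 2 + y ^ 2) ^ 2 = x ^ 2 + y ^ 2 := Real.sq_sqrt h.le
  have hd : HasDerivAt (fun t => HK a t y px py)
      (a * x / Real.sqrt (x ^ 2 + y ^ 2) ^ 3) x := by
    have h2 := (hasDerivAt_const x a).div (sqrt_hda x (y ^ 2) h) (ne_of_gt hr)
    have h3 := (hasDerivAt_const x ((px ^ 2 + py ^ 2) / 2)).sub h2
    refine h3.congr_deriv (Eq.symm ?_)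
    ring
  exact hd.deriv

lemma pd2_HK (a x y px py : ℝ) (h : 0 < x ^ 2 + y ^ 2) :
    pd2 (HK a) x y px py = a * y / Real.sqrt (x ^ 2 + y ^ 2) ^ 3 := by
  have hr : (0:ℝ) < Real.sqrt (x ^ 2 + y ^ 2) := Real.sqrt_pos.mpr h
  have hd : HasDerivAt (fun t => HK a x t px py)
      (a * y / Real.sqrt (x ^ 2 + y ^ 2) ^ 3) y := by
    have h2 := (hasDerivAt_const y a).div (sqrt_hda2 y (x ^ 2) h) (ne_of_gt hr)
    have h3 := (hasDerivAt_const y ((px ^ 2 + py ^ 2) / 2)).sub h2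
    refine h3.congr_deriv (Eq.symm ?_)
    ring
  exact hd.deriv

lemma pd3_HK (a x y px py : ℝ) :
    pd3 (HK a) x y px py = px := by
  have hd : HasDerivAt (fun t => HK a x y t py) px px := by
    have h1 : HasDerivAt (fun t : ℝ => (t ^ 2 + py ^ 2) / 2) px px := by
      have := (((hasDerivAt_pow 2 px).add_const (py ^ 2)).div_const 2)
      refine this.congr_deriv (Eq.symm ?_)
      ring
    exact h1.sub_const (a / Real.sqrt (x ^ 2 + y ^ 2))
  exact hd.deriv

lemma pd4_HK (a x y px py : ℝ) :
    pd4 (HK a) x y px py = py := by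
  have hd : HasDerivAt (fun t => HK a x y px t) py py := by
    have h1 : HasDerivAt (fun t : ℝ => (px ^ 2 + t ^ 2) / 2) py py := by
      have := (((hasDerivAt_pow 2 py).const_add (px ^ 2)).div_const 2)
      refine this.congr_deriv (Eq.symm ?_)
      ring
    exact h1.sub_const (a / Real.sqrt (x ^ 2 + y ^ 2))
  exact hd.deriv

lemma pd1_LRL (a x y px py : ℝ) (h : 0 < x ^ 2 + y ^ 2) :
    pd1 (LRL a) x y px py = py ^ 2 - a * y ^ 2 / Real.sqrt (x ^ 2 + y ^ 2) ^ 3 := by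
  have hr : (0:ℝ) < Real.sqrt (x ^ 2 + y ^ 2) := Real.sqrt_pos.mpr h
  have hr2 : Real.sqrt (x ^ 2 + y ^ 2) ^ 2 = x ^ 2 + y ^ 2 := Real.sq_sqrt h.le
  have hd : HasDerivAt (fun t => LRL a t y px py)
      (py ^ 2 - a * y ^ 2 / Real.sqrt (x ^ 2 + y ^ 2) ^ 3) x := by
    have h1 : HasDerivAt (fun t : ℝ => py * (t * py - y * px)) (py * (1 * py)) x :=
      (((hasDerivAt_id x).mul_const py).sub_const (y * px)).const_mul py
    have h2 := ((hasDerivAt_id x).const_mul a).div (sqrt_hda x (y ^ 2) h) (ne_of_gt hr)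
    have h3 := h1.sub h2
    refine h3.congr_deriv (Eq.symm ?_)
    set s := Real.sqrt (x ^ 2 + y ^ 2) with hs
    have hne : s ≠ 0 := ne_of_gt hr
    simp only [id]
    field_simp
    linear_combination a * hr2
  exact hd.deriv

lemma pd2_LRL (a x y px py : ℝ) (h : 0 < x ^ 2 + y ^ 2) :
    pd2 (LRL a) x y px py = -(py * px) + a * x * y / Real.sqrt (x ^ 2 + y ^ 2) ^ 3 := by
  have hr : (0:ℝ) < Real.sqrt (x ^ 2 + y ^ 2) := Real.sqrt_pos.mpr h
  have hr2 : Real.sqrt (x ^ 2 + y ^ 2) ^ 2 = x ^ 2 + y ^ 2 := Real.sq_sqrt h.le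
  have hd : HasDerivAt (fun t => LRL a x t px py)
      (-(py * px) + a * x * y / Real.sqrt (x ^ 2 + y ^ 2) ^ 3) y := by
    have h1 : HasDerivAt (fun t : ℝ => py * (x * py - t * px)) (py * (-(1 * px))) y := by
      have := (((hasDerivAt_id y).mul_const px).const_sub (x * py)).const_mul py
      simpa using this
    have h2 := (hasDerivAt_const y (a * x)).div (sqrt_hda2 y (x ^ 2) h) (ne_of_gt hr)
    have h3 := h1.sub h2
    refine h3.congr_deriv (Eq.symm ?_)
    ring
  exact hd.deriv

lemma pd3_LRL (a x y px py : ℝ) :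
    pd3 (LRL a) x y px py = -(y * py) := by
  have hd : HasDerivAt (fun t => LRL a x y t py) (-(y * py)) px := by
    have h1 : HasDerivAt (fun t : ℝ => py * (x * py - y * t)) (py * (-(y * 1))) px := by
      have := (((hasDerivAt_id px).const_mul y).const_sub (x * py)).const_mul py
      simpa using this
    have h2 := h1.sub_const (a * x / Real.sqrt (x ^ 2 + y ^ 2))
    refine h2.congr_deriv (Eq.symm ?_)
    ring
  exact hd.deriv

lemma pd4_LRL (a x y px py : ℝ) :
    pd4 (LRL a) x y px py = 2 * x * py - y * px := by
  have hd : HasDerivAt (fun t => LRL a x y px t) (2 * x * py - y * px) py := by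
    have h1 : HasDerivAt (fun t : ℝ => t * (x * t - y * px))
        (1 * (x * py - y * px) + py * (x * 1)) py :=
      (hasDerivAt_id py).mul (((hasDerivAt_id py).const_mul x).sub_const (y * px))
    have h2 := h1.sub_const (a * x / Real.sqrt (x ^ 2 + y ^ 2))
    refine h2.congr_deriv (Eq.symm ?_)
    ring
  exact hd.deriv

theorem Kepler_lenard_chain_parabolic (a : ℝ) :
    ∀ x y px py : ℝ, 0 < x ^ 2 + y ^ 2 → ∀ i : Fin 4,
      2 * x * grad4 (HK a) x y px py i +
        (-1) * ∑ j : Fin 4, NparK x y px py j i * grad4 (HK a) x y px py j =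
      grad4 (LRL a) x y px py i := by
  intro x y px py h i
  have hr : (0:ℝ) < Real.sqrt (x ^ 2 + y ^ 2) := Real.sqrt_pos.mpr h
  fin_cases i <;>
    simp [grad4, NparK, Fin.sum_univ_four, pd1_HK a x y px py h, pd2_HK a x y px py h,
      pd3_HK, pd4_HK, pd1_LRL a x y px py h, pd2_LRL a x y px py h, pd3_LRL, pd4_LRL] <;>
    ring
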